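/- arXiv:math/0309026 — 4 statements merged into one kernel-verified Lean document; each statement's English description precedes it below -/
import Mathlib

section
/- Let M be an n×n real matrix for which there exist C ≥ 0 and α ∈ [0,1) such that the operator norm of M^k is at most C·α^k for all k. Let z, h : ℕ → ℝⁿ be bounded sequences satisfying z_l = M·z_{l+1} + h_l for all l. Then the series ∑_{l=0}^∞ M^l·h_l converges (the family (M^l·h_l) is summable) and z_0 = ∑_{l=0}^∞ M^l·h_l. -/
open Filter Topology Finset Matrix

/-! Unrolling the recursion `N` times gives `z₀ = ∑_{l<N} Mˡ hₗ + Mᴺ z_N`. The geometric decay of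
`Mᵏ` makes the series summable and, since `z` is bounded, the remainder `Mᴺ z_N` tends to zero. -/

namespace Matrix

theorem eq_sum_range_pow_mulVec_add_pow_mulVec {ι R : Type*} [Fintype ι] [DecidableEq ι]
    [Semiring R] (M : Matrix ι ι R) {z h : ℕ → ι → R}
    (hrec : ∀ l, z l = M *ᵥ z (l + 1) + h l) (N : ℕ) :
    z 0 = ∑ l ∈ range N, (M ^ l) *ᵥ h l + (M ^ N) *ᵥ z N := by
  induction N with
  | zero => simp
  | succ N ih =>
    rw [ih, sum_range_succ, hrec N, mulVec_add, pow_succ, ← mulVec_mulVec]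
    abel

theorem norm_pow_mulVec_le_geometric {ι : Type*} [Fintype ι] [DecidableEq ι]
    {M : Matrix ι ι ℝ} {C α B : ℝ} (hC : 0 ≤ C) (hα0 : 0 ≤ α)
    (hM : ∀ (k : ℕ) (v : ι → ℝ), ‖(M ^ k) *ᵥ v‖ ≤ C * α ^ k * ‖v‖)
    {v : ℕ → ι → ℝ} (hv : ∀ l, ‖v l‖ ≤ B) (l : ℕ) :
    ‖(M ^ l) *ᵥ v l‖ ≤ C * B * α ^ l :=
  calc ‖(M ^ l) *ᵥ v l‖ ≤ C * α ^ l * ‖v l‖ := hM l _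
    _ ≤ C * α ^ l * B := by gcongr; exact hv l
    _ = C * B * α ^ l := by ring

end Matrix

/-- Infinite-horizon variation-of-constants formula: if the powers of `M` decay
geometrically (operator bound `‖M^k v‖ ≤ C * α^k * ‖v‖` with `C ≥ 0`, `0 ≤ α < 1`)
and `z, h` are bounded sequences satisfying `z_l = M z_{l+1} + h_l`, then the series
`∑ M^l h_l` converges and `z 0 = ∑' l, M^l h_l`. -/
theorem backward_variation_of_constants_infinite {n : ℕ} (M : Matrix (Fin n) (Fin n) ℝ)
    (C α : ℝ) (hC : 0 ≤ C) (hα0 : 0 ≤ α) (hα1 : α < 1)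
    (hM : ∀ (k : ℕ) (v : Fin n → ℝ), ‖(M ^ k).mulVec v‖ ≤ C * α ^ k * ‖v‖)
    (z h : ℕ → Fin n → ℝ)
    (hzb : ∃ Bz, ∀ l, ‖z l‖ ≤ Bz) (hhb : ∃ Bh, ∀ l, ‖h l‖ ≤ Bh)
    (hrec : ∀ l, z l = M.mulVec (z (l + 1)) + h l) :
    Summable (fun l : ℕ => (M ^ l).mulVec (h l)) ∧
      z 0 = ∑' l : ℕ, (M ^ l).mulVec (h l) := by
  obtain ⟨Bz, hBz⟩ := hzb
  obtain ⟨Bh, hBh⟩ := hhb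
  have hsum : Summable (fun l : ℕ => (M ^ l) *ᵥ h l) :=
    .of_norm_bounded ((summable_geometric_of_lt_one hα0 hα1).mul_left _)
      (M.norm_pow_mulVec_le_geometric hC hα0 hM hBh)
  have hrem : Tendsto (fun N : ℕ => (M ^ N) *ᵥ z N) atTop (𝓝 0) :=
    squeeze_zero_norm (M.norm_pow_mulVec_le_geometric hC hα0 hM hBz) <| by
      simpa using (tendsto_pow_atTop_nhds_zero_of_lt_one hα0 hα1).const_mul (C * Bz)
  have hconst : Tendsto (fun _ : ℕ => z 0) atTop (𝓝 (∑' l, (M ^ l) *ᵥ h l + 0)) :=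
    (hsum.hasSum.tendsto_sum_nat.add hrem).congr fun N =>
      (M.eq_sum_range_pow_mulVec_add_pow_mulVec hrec N).symm
  exact ⟨hsum, by simpa using tendsto_nhds_unique tendsto_const_nhds hconst⟩
end

section
/- Let C be an n×n real matrix and α ∈ [0,1) with ‖C·v‖ ≤ α‖v‖ and ‖Cᵀ·v‖ ≤ α‖v‖ for all v ∈ ℝⁿ. Let f, h : ℝⁿ × ℝⁿ → ℝⁿ be continuously differentiable maps with f(0,0) = 0, h(0,0) = 0, and with total derivatives vanishing at (0,0), and assume the derivatives of f and h are Lipschitz on a neighborhood of the origin. Then there exist ε > 0, L ≥ 0, and a map ψ : ℝⁿ → ℝⁿ with ψ(0) = 0, Lipschitz with constant L on the closed ε-ball, such that for every x₀ with ‖x₀‖ ≤ ε there exists a sequence x : ℕ → ℝⁿ with x_0 = x₀ and ‖x_k‖ ≤ ε for all k, satisfying x_{k+1} = C·x_k + f(x_k, x_{k+1}) and ψ(x_k) = Cᵀ·ψ(x_{k+1}) + h(x_k, x_{k+1}) for all k, and with x_k → 0 (hence ψ(x_k) → 0) as k → ∞. -/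
/-!
Since `f` and `h` vanish to first order at the origin, on a small ball they are `δ`-Lipschitz
for any prescribed `δ > 0`. For `δ` small, `y ↦ C x + f (x, y)` is then a contraction of the
`ε`-ball, so the implicit forward equation is solved by a map `x⁺ = F x`, which is itself
`β`-Lipschitz with `β < 1`; its orbits converge to `0`. Solving the backward equation along
these orbits gives `ψ x = ∑ⱼ (Cᵀ)ʲ h (Fʲ x, Fʲ⁺¹ x)`. The difference of the `j`-th terms at
`x` and `y` is at most `δ ‖x - y‖ (αβ)ʲ`, so the series converges to a Lipschitz map, and
splitting off its first term gives the backward recursion.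
-/

open scoped NNReal Matrix

open Metric Set Filter Topology Function

theorem HasStrictFDerivAt.eventually_lipschitzOnWith_closedBall_of_zero
    {E F : Type*} [NormedAddCommGroup E] [NormedSpace ℝ E] [NormedAddCommGroup F]
    [NormedSpace ℝ F] {f : E → F} {a : E} (hf : HasStrictFDerivAt f (0 : E →L[ℝ] F) a)
    {c : ℝ≥0} (hc : 0 < c) :
    ∀ᶠ r in 𝓝[>] (0 : ℝ), LipschitzOnWith c f (closedBall a r) := by
  obtain ⟨s, hs, hfs⟩ := hf.approximates_deriv_on_nhds (Or.inr hc)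
  obtain ⟨r₀, hr₀, hr₀s⟩ := nhds_basis_closedBall.mem_iff.mp hs
  filter_upwards [Ioo_mem_nhdsGT hr₀] with r hr
  simpa using (hfs.mono_set ((closedBall_subset_closedBall hr.2.le).trans hr₀s)).lipschitzOnWith

theorem LipschitzOnWith.iterate {α : Type*} [PseudoEMetricSpace α] {K : ℝ≥0} {F : α → α}
    {s : Set α} (hF : LipschitzOnWith K F s) (hFs : MapsTo F s s) :
    ∀ n, LipschitzOnWith (K ^ n) F^[n] s
  | 0 => by simpa using LipschitzWith.id.lipschitzOnWith
  | n + 1 => by rw [pow_succ, iterate_succ]; exact (hF.iterate hFs n).comp hF hFs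

section Orbits

variable {E : Type*} [SeminormedAddCommGroup E] {F : E → E} {s : Set E} {β : ℝ≥0}

theorem tendsto_iterate_nhds_zero (hF : LipschitzOnWith β F s) (hFs : MapsTo F s s)
    (hβ : β < 1) (h0 : 0 ∈ s) (hF0 : F 0 = 0) {x : E} (hx : x ∈ s) :
    Tendsto (fun k => F^[k] x) atTop (𝓝 0) := by
  have hgeom : Tendsto (fun k => (β : ℝ) ^ k * ‖x‖) atTop (𝓝 0) := by
    simpa using (tendsto_pow_atTop_nhds_zero_of_lt_one β.coe_nonneg hβ).mul_const ‖x‖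
  refine squeeze_zero_norm (fun k => ?_) hgeom
  simpa [iterate_fixed hF0] using (hF.iterate hFs k).norm_sub_le hx h0

theorem norm_sub_along_orbits_le (h : E × E → E) {δ : ℝ≥0} (hF : LipschitzOnWith β F s)
    (hFs : MapsTo F s s) (hβ1 : β ≤ 1) (hh : LipschitzOnWith δ h (s ×ˢ s)) {x y : E}
    (hx : x ∈ s) (hy : y ∈ s) (j : ℕ) :
    ‖h (F^[j] x, F^[j + 1] x) - h (F^[j] y, F^[j + 1] y)‖ ≤ δ * ‖x - y‖ * β ^ j := by
  have hFj := hF.iterate hFs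
  calc _ ≤ δ * ‖(F^[j] x, F^[j + 1] x) - (F^[j] y, F^[j + 1] y)‖ :=
        hh.norm_sub_le ⟨hFs.iterate j hx, hFs.iterate (j + 1) hx⟩
          ⟨hFs.iterate j hy, hFs.iterate (j + 1) hy⟩
    _ = δ * max ‖F^[j] x - F^[j] y‖ ‖F^[j + 1] x - F^[j + 1] y‖ := by
        rw [Prod.mk_sub_mk, Prod.norm_mk]
    _ ≤ δ * (β ^ j * ‖x - y‖) := by
        gcongr
        refine max_le (by simpa using (hFj j).norm_sub_le hx hy)
          ((hFj (j + 1)).norm_sub_le hx hy |>.trans ?_)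
        push_cast
        exact mul_le_mul_of_nonneg_right
          (pow_le_pow_of_le_one β.coe_nonneg (by exact_mod_cast hβ1) j.le_succ) (norm_nonneg _)
    _ = δ * ‖x - y‖ * β ^ j := by ring

end Orbits

section ImplicitStep

variable {E : Type*} [NormedAddCommGroup E] [NormedSpace ℝ E]
  {A : E →L[ℝ] E} {f : E × E → E} {α δ β : ℝ≥0}

/- The hypothesis `α + δ + β * δ ≤ β` is `(α + δ) / (1 - δ) ≤ β` written without the truncated
subtraction of `ℝ≥0`; it forces `δ < 1`. -/
theorem norm_sub_le_of_implicit_step {s : Set E} (hA : ∀ v, ‖A v‖ ≤ α * ‖v‖)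
    (hf : LipschitzOnWith δ f (s ×ˢ s)) (hβ : α + δ + β * δ ≤ β)
    {x x' y y' : E} (hx : x ∈ s) (hx' : x' ∈ s) (hys : y ∈ s) (hys' : y' ∈ s)
    (hy : y = A x + f (x, y)) (hy' : y' = A x' + f (x', y')) :
    ‖y - y'‖ ≤ β * ‖x - x'‖ := by
  have hsplit : ‖y - y'‖ ≤ α * ‖x - x'‖ + δ * (‖x - x'‖ + ‖y - y'‖) :=
    calc ‖y - y'‖ = ‖A (x - x') + (f (x, y) - f (x', y'))‖ := by
          rw [map_sub]; conv_lhs => rw [hy, hy']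
          abel_nf
      _ ≤ ‖A (x - x')‖ + ‖f (x, y) - f (x', y')‖ := norm_add_le _ _
      _ ≤ α * ‖x - x'‖ + δ * max ‖x - x'‖ ‖y - y'‖ :=
          add_le_add (hA _) (hf.norm_sub_le ⟨hx, hys⟩ ⟨hx', hys'⟩)
      _ ≤ α * ‖x - x'‖ + δ * (‖x - x'‖ + ‖y - y'‖) := by
          gcongr; exact max_le_add_of_nonneg (norm_nonneg _) (norm_nonneg _)
  have hβ' : (α + δ + β * δ : ℝ) ≤ β := by exact_mod_cast hβ
  nlinarith [norm_nonneg (x - x'), norm_nonneg (y - y'), α.coe_nonneg, β.coe_nonneg,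
    δ.coe_nonneg, mul_nonneg β.coe_nonneg δ.coe_nonneg]

theorem exists_implicit_step [CompleteSpace E] {ε : ℝ} (hA : ∀ v, ‖A v‖ ≤ α * ‖v‖)
    (hf : LipschitzOnWith δ f (closedBall 0 ε ×ˢ closedBall 0 ε)) (hf0 : f (0, 0) = 0)
    (hδ : δ < 1) (hαδ : α + δ ≤ 1) {x : E} (hx : x ∈ closedBall 0 ε) :
    ∃ y ∈ closedBall (0 : E) ε, y = A x + f (x, y) := by
  set g : E → E := fun y => A x + f (x, y)
  have hε : 0 ≤ ε := dist_nonneg.trans hx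
  have h0 : (0 : E) ∈ closedBall 0 ε := mem_closedBall_self hε
  have hgs : MapsTo g (closedBall 0 ε) (closedBall 0 ε) := fun y hy => by
    have hf_le : ‖f (x, y)‖ ≤ δ * max ‖x‖ ‖y‖ := by
      simpa [hf0] using hf.norm_sub_le (x := (x, y)) (y := (0, 0)) ⟨hx, hy⟩ ⟨h0, h0⟩
    rw [mem_closedBall_zero_iff] at hx hy ⊢
    have hαδ' : (α + δ : ℝ) ≤ 1 := by exact_mod_cast hαδ
    calc ‖A x + f (x, y)‖ ≤ α * ‖x‖ + δ * max ‖x‖ ‖y‖ := norm_add_le_of_le (hA x) hf_le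
      _ ≤ (α + δ) * ε := by rw [add_mul]; gcongr; exact max_le hx hy
      _ ≤ ε := mul_le_of_le_one_left hε hαδ'
  have hg : ContractingWith δ (hgs.restrict g _ _) := by
    refine ⟨hδ, hgs.lipschitzOnWith_iff_restrict.mp ?_⟩
    refine lipschitzOnWith_iff_norm_sub_le.2 fun y hy y' hy' => ?_
    calc ‖g y - g y'‖ = ‖f (x, y) - f (x, y')‖ := by simp only [g, add_sub_add_left_eq_sub]
      _ ≤ δ * ‖(x, y) - (x, y')‖ := hf.norm_sub_le ⟨hx, hy⟩ ⟨hx, hy'⟩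
      _ = δ * ‖y - y'‖ := by simp
  obtain ⟨y, hys, hy, -⟩ := hg.exists_fixedPoint' isClosed_closedBall.isComplete hgs hx
    (edist_ne_top _ _)
  exact ⟨y, hys, hy.symm⟩

theorem exists_implicit_step_map [CompleteSpace E] {ε : ℝ} (hε : 0 ≤ ε)
    (hA : ∀ v, ‖A v‖ ≤ α * ‖v‖) (hf : LipschitzOnWith δ f (closedBall 0 ε ×ˢ closedBall 0 ε))
    (hf0 : f (0, 0) = 0) (hβ : α + δ + β * δ ≤ β) (hβ1 : β ≤ 1) :
    ∃ F : E → E, MapsTo F (closedBall 0 ε) (closedBall 0 ε) ∧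
      (∀ x ∈ closedBall (0 : E) ε, F x = A x + f (x, F x)) ∧
      LipschitzOnWith β F (closedBall 0 ε) ∧ F 0 = 0 := by
  have hαδ : α + δ ≤ 1 := le_trans (le_self_add.trans hβ) hβ1
  have hδ : δ < 1 := by
    have hβ' : (α + δ + β * δ : ℝ) ≤ β := by exact_mod_cast hβ
    rw [← NNReal.coe_lt_one]
    nlinarith [α.coe_nonneg, β.coe_nonneg]
  have hstep : ∀ x, ∃ y, x ∈ closedBall (0 : E) ε → y ∈ closedBall 0 ε ∧ y = A x + f (x, y) :=
    fun x => (em (x ∈ closedBall (0 : E) ε)).elim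
      (fun hx => (exists_implicit_step hA hf hf0 hδ hαδ hx).imp fun _ hy _ => hy)
      (fun hx => ⟨0, fun h => absurd h hx⟩)
  choose F hF using hstep
  have h0 : (0 : E) ∈ closedBall 0 ε := mem_closedBall_self hε
  refine ⟨F, fun x hx => (hF x hx).1, fun x hx => (hF x hx).2, ?_, ?_⟩
  · exact lipschitzOnWith_iff_norm_sub_le.2 fun x hx x' hx' =>
      norm_sub_le_of_implicit_step hA hf hβ hx hx' (hF x hx).1 (hF x' hx').1
        (hF x hx).2 (hF x' hx').2
  · -- `F 0` and `0` both solve the step equation at `0`, and the estimate makes solutions unique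
    have h00 : (0 : E) = A 0 + f (0, 0) := by simp [hf0]
    simpa [sub_eq_zero] using norm_sub_le_of_implicit_step hA hf hβ h0 h0 (hF 0 h0).1 h0
      (hF 0 h0).2 h00

end ImplicitStep

section StableManifoldMap

variable {E : Type*} [NormedAddCommGroup E] [NormedSpace ℝ E]
  (B : E →L[ℝ] E) (F : E → E) (h : E × E → E) {α β δ : ℝ≥0}

noncomputable def stableManifoldMap (x : E) : E :=
  ∑' j, (B ^ j) (h (F^[j] x, F^[j + 1] x))

variable {B}

theorem norm_pow_apply_le (hB : ∀ v, ‖B v‖ ≤ α * ‖v‖) (j : ℕ) (v : E) :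
    ‖(B ^ j) v‖ ≤ α ^ j * ‖v‖ := by
  induction j with
  | zero => simp
  | succ j ih =>
    calc ‖(B ^ (j + 1)) v‖ = ‖B ((B ^ j) v)‖ := by rw [pow_succ']; rfl
      _ ≤ α * (α ^ j * ‖v‖) := (hB _).trans (by gcongr)
      _ = α ^ (j + 1) * ‖v‖ := by rw [pow_succ']; ring

theorem norm_pow_apply_le_geometric (hB : ∀ v, ‖B v‖ ≤ α * ‖v‖) {u : ℕ → E} {c : ℝ}
    {r : ℝ≥0} (hu : ∀ j, ‖u j‖ ≤ c * r ^ j) (j : ℕ) : ‖(B ^ j) (u j)‖ ≤ c * (α * r) ^ j :=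
  calc ‖(B ^ j) (u j)‖ ≤ α ^ j * (c * r ^ j) :=
        (norm_pow_apply_le hB j _).trans (by gcongr; exact hu j)
    _ = c * (α * r) ^ j := by rw [mul_pow]; ring

theorem summable_pow_apply [CompleteSpace E] (hB : ∀ v, ‖B v‖ ≤ α * ‖v‖) {u : ℕ → E} {c : ℝ}
    {r : ℝ≥0} (hαr : α * r < 1) (hu : ∀ j, ‖u j‖ ≤ c * r ^ j) :
    Summable fun j => (B ^ j) (u j) :=
  .of_norm_bounded
    ((summable_geometric_of_lt_one (r := α * r) (by positivity) (by exact_mod_cast hαr)).mul_left c)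
    (norm_pow_apply_le_geometric hB hu)

theorem norm_tsum_pow_apply_le (hB : ∀ v, ‖B v‖ ≤ α * ‖v‖) {u : ℕ → E} {c : ℝ}
    {r : ℝ≥0} (hαr : α * r < 1) (hu : ∀ j, ‖u j‖ ≤ c * r ^ j) :
    ‖∑' j, (B ^ j) (u j)‖ ≤ c * (1 - (α : ℝ) * r)⁻¹ :=
  tsum_of_norm_bounded
    ((hasSum_geometric_of_lt_one (r := α * r) (by positivity) (by exact_mod_cast hαr)).mul_left c)
    (norm_pow_apply_le_geometric hB hu)

theorem stableManifoldMap_zero (hF0 : F 0 = 0) (hh0 : h (0, 0) = 0) :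
    stableManifoldMap B F h 0 = 0 := by
  simp [stableManifoldMap, iterate_fixed hF0, hh0]

theorem stableManifoldMap_eq_add {x : E}
    (hsum : Summable fun j => (B ^ j) (h (F^[j] (F x), F^[j + 1] (F x)))) :
    stableManifoldMap B F h x = B (stableManifoldMap B F h (F x)) + h (x, F x) := by
  have hshift : ∀ j, (B ^ (j + 1)) (h (F^[j + 1] x, F^[j + 1 + 1] x)) =
      B ((B ^ j) (h (F^[j] (F x), F^[j + 1] (F x)))) := fun j => by
    rw [pow_succ', iterate_succ_apply, iterate_succ_apply]; rfl
  unfold stableManifoldMap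
  rw [tsum_eq_zero_add' (by simpa only [hshift] using hsum.mapL B)]
  simp only [hshift, ← B.map_tsum hsum]
  simp [add_comm]

variable {s : Set E}

theorem summable_stableManifoldMap [CompleteSpace E] (hB : ∀ v, ‖B v‖ ≤ α * ‖v‖)
    (hF : LipschitzOnWith β F s) (hFs : MapsTo F s s) (hβ1 : β ≤ 1) (hαβ : α * β < 1)
    (hh : LipschitzOnWith δ h (s ×ˢ s)) (h0 : 0 ∈ s) (hF0 : F 0 = 0) (hh0 : h (0, 0) = 0)
    {x : E} (hx : x ∈ s) : Summable fun j => (B ^ j) (h (F^[j] x, F^[j + 1] x)) :=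
  summable_pow_apply hB hαβ fun j => by
    simpa [iterate_fixed hF0, hh0] using norm_sub_along_orbits_le h hF hFs hβ1 hh hx h0 j

theorem lipschitzOnWith_stableManifoldMap [CompleteSpace E] (hB : ∀ v, ‖B v‖ ≤ α * ‖v‖)
    (hF : LipschitzOnWith β F s) (hFs : MapsTo F s s) (hβ1 : β ≤ 1) (hαβ : α * β < 1)
    (hh : LipschitzOnWith δ h (s ×ˢ s)) (h0 : 0 ∈ s) (hF0 : F 0 = 0) (hh0 : h (0, 0) = 0) :
    LipschitzOnWith (Real.toNNReal (δ * (1 - (α : ℝ) * β)⁻¹)) (stableManifoldMap B F h) s := by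
  refine LipschitzOnWith.of_dist_le' fun x hx y hy => ?_
  rw [dist_eq_norm, dist_eq_norm, stableManifoldMap, stableManifoldMap,
    ← (summable_stableManifoldMap F h hB hF hFs hβ1 hαβ hh h0 hF0 hh0 hx).tsum_sub
      (summable_stableManifoldMap F h hB hF hFs hβ1 hαβ hh h0 hF0 hh0 hy)]
  simp_rw [← map_sub]
  calc _ ≤ δ * ‖x - y‖ * (1 - (α : ℝ) * β)⁻¹ :=
        norm_tsum_pow_apply_le hB hαβ (norm_sub_along_orbits_le h hF hFs hβ1 hh hx hy)
    _ = δ * (1 - (α : ℝ) * β)⁻¹ * ‖x - y‖ := by ring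

end StableManifoldMap

theorem exists_implicit_step_constants {α : ℝ≥0} (hα : α < 1) :
    ∃ δ β : ℝ≥0, 0 < δ ∧ β < 1 ∧ α + δ + β * δ ≤ β := by
  have hα' : (α : ℝ) < 1 := by exact_mod_cast hα
  refine ⟨(1 - α) / 4, (3 + α) / 4, ?_, ?_, ?_⟩ <;>
    simp only [← NNReal.coe_lt_coe, ← NNReal.coe_le_coe, NNReal.coe_div, NNReal.coe_add,
      NNReal.coe_mul, NNReal.coe_sub hα.le, NNReal.coe_zero, NNReal.coe_one, NNReal.coe_ofNat]
  all_goals nlinarith [α.coe_nonneg]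

theorem exists_local_stable_manifold_of_lipschitzOnWith {E : Type*} [NormedAddCommGroup E]
    [NormedSpace ℝ E] [CompleteSpace E] {A B : E →L[ℝ] E} {f h : E × E → E} {α β δ : ℝ≥0}
    {ε : ℝ} (hA : ∀ v, ‖A v‖ ≤ α * ‖v‖) (hB : ∀ v, ‖B v‖ ≤ α * ‖v‖)
    (hf : LipschitzOnWith δ f (closedBall 0 ε ×ˢ closedBall 0 ε))
    (hh : LipschitzOnWith δ h (closedBall 0 ε ×ˢ closedBall 0 ε))
    (hf0 : f (0, 0) = 0) (hh0 : h (0, 0) = 0) (hε : 0 ≤ ε)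
    (hβ : α + δ + β * δ ≤ β) (hβ1 : β < 1) :
    ∃ (ψ : E → E) (K : ℝ≥0), ψ 0 = 0 ∧ LipschitzOnWith K ψ (closedBall 0 ε) ∧
      ∀ x₀ ∈ closedBall (0 : E) ε, ∃ x : ℕ → E, x 0 = x₀ ∧ (∀ k, x k ∈ closedBall 0 ε) ∧
        (∀ k, x (k + 1) = A (x k) + f (x k, x (k + 1))) ∧
        (∀ k, ψ (x k) = B (ψ (x (k + 1))) + h (x k, x (k + 1))) ∧
        Tendsto x atTop (𝓝 0) := by
  have hαβ : α * β < 1 :=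
    mul_lt_one_of_nonneg_of_lt_one_right ((le_self_add.trans le_self_add).trans
      (hβ.trans hβ1.le)) zero_le hβ1
  have h0 : (0 : E) ∈ closedBall 0 ε := mem_closedBall_self hε
  obtain ⟨F, hFs, hFeq, hF, hF0⟩ := exists_implicit_step_map hε hA hf hf0 hβ hβ1.le
  refine ⟨stableManifoldMap B F h, _, stableManifoldMap_zero F h hF0 hh0,
    lipschitzOnWith_stableManifoldMap F h hB hF hFs hβ1.le hαβ hh h0 hF0 hh0,
    fun x₀ hx₀ => ⟨fun k => F^[k] x₀, rfl, fun k => hFs.iterate k hx₀, fun k => ?_, fun k => ?_,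
      tendsto_iterate_nhds_zero hF hFs hβ1 h0 hF0 hx₀⟩⟩
  · simp only [iterate_succ_apply']
    exact hFeq _ (hFs.iterate k hx₀)
  · simp only [iterate_succ_apply']
    exact stableManifoldMap_eq_add F h (summable_stableManifoldMap F h hB hF hFs hβ1.le hαβ hh
      h0 hF0 hh0 (hFs (hFs.iterate k hx₀)))

theorem local_stable_manifold_general {n : ℕ} (C : Matrix (Fin n) (Fin n) ℝ) (α : ℝ)
    (hα0 : 0 ≤ α) (hα1 : α < 1)
    (hC : ∀ v : Fin n → ℝ, ‖C.mulVec v‖ ≤ α * ‖v‖)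
    (hCT : ∀ v : Fin n → ℝ, ‖Cᵀ.mulVec v‖ ≤ α * ‖v‖)
    (f h : (Fin n → ℝ) × (Fin n → ℝ) → Fin n → ℝ)
    (hf : ContDiff ℝ 1 f) (hh : ContDiff ℝ 1 h)
    (hf0 : f (0, 0) = 0) (hh0 : h (0, 0) = 0)
    (hdf0 : fderiv ℝ f (0, 0) = 0) (hdh0 : fderiv ℝ h (0, 0) = 0) :
    ∃ (ε L : ℝ), 0 < ε ∧ 0 ≤ L ∧
      ∃ ψ : (Fin n → ℝ) → Fin n → ℝ, ψ 0 = 0 ∧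
        LipschitzOnWith (Real.toNNReal L) ψ (Metric.closedBall 0 ε) ∧
        ∀ x₀ : Fin n → ℝ, ‖x₀‖ ≤ ε →
          ∃ x : ℕ → Fin n → ℝ, x 0 = x₀ ∧ (∀ k, ‖x k‖ ≤ ε) ∧
            (∀ k, x (k + 1) = C.mulVec (x k) + f (x k, x (k + 1))) ∧
            (∀ k, ψ (x k) = Cᵀ.mulVec (ψ (x (k + 1))) + h (x k, x (k + 1))) ∧
            Filter.Tendsto x Filter.atTop (nhds 0) := by
  obtain ⟨δ, β, hδ, hβ1, hβ⟩ := exists_implicit_step_constants (α := ⟨α, hα0⟩) hα1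
  have hf_small :=
    (hdf0 ▸ hf.hasStrictFDerivAt one_ne_zero).eventually_lipschitzOnWith_closedBall_of_zero hδ
  have hh_small :=
    (hdh0 ▸ hh.hasStrictFDerivAt one_ne_zero).eventually_lipschitzOnWith_closedBall_of_zero hδ
  obtain ⟨ε, hfε, hhε, hε⟩ := (hf_small.and (hh_small.and self_mem_nhdsWithin)).exists
  rw [← closedBall_prod_same] at hfε hhε
  obtain ⟨ψ, K, hψ0, hψ, hsol⟩ := exists_local_stable_manifold_of_lipschitzOnWith
    (A := (Matrix.mulVecLin C).toContinuousLinearMap)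
    (B := (Matrix.mulVecLin Cᵀ).toContinuousLinearMap) (α := ⟨α, hα0⟩)
    hC hCT hfε hhε hf0 hh0 hε.le hβ hβ1
  refine ⟨ε, K, hε, K.2, ψ, hψ0, by rwa [Real.toNNReal_coe], fun x₀ hx₀ => ?_⟩
  obtain ⟨x, hx0, hxε, hfwd, hbwd, hlim⟩ := hsol x₀ (mem_closedBall_zero_iff.2 hx₀)
  exact ⟨x, hx0, fun k => mem_closedBall_zero_iff.1 (hxε k), hfwd, hbwd, hlim⟩

/-- Local Stable Manifold Theorem for the diagonalized bidirectional discrete-time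
dynamics `x⁺ = C x + f(x, x⁺)`, `z = Cᵀ z⁺ + h(x, x⁺)`: if `C` and `Cᵀ` contract with
factor `α < 1`, `f, h` are `C¹`, vanish to first order at the origin, and have Lipschitz
derivatives near the origin, then there is a local stable manifold `z = ψ(x)` with
`ψ(0) = 0`, `ψ` Lipschitz on the `ε`-ball, carrying solutions converging to `0`. -/
theorem local_stable_manifold {n : ℕ} (C : Matrix (Fin n) (Fin n) ℝ) (α : ℝ)
    (hα0 : 0 ≤ α) (hα1 : α < 1)
    (hC : ∀ v : Fin n → ℝ, ‖C.mulVec v‖ ≤ α * ‖v‖)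
    (hCT : ∀ v : Fin n → ℝ, ‖Cᵀ.mulVec v‖ ≤ α * ‖v‖)
    (f h : (Fin n → ℝ) × (Fin n → ℝ) → Fin n → ℝ)
    (hf : ContDiff ℝ 1 f) (hh : ContDiff ℝ 1 h)
    (hf0 : f (0, 0) = 0) (hh0 : h (0, 0) = 0)
    (hdf0 : fderiv ℝ f (0, 0) = 0) (hdh0 : fderiv ℝ h (0, 0) = 0)
    (hLip : ∃ (U : Set ((Fin n → ℝ) × (Fin n → ℝ))) (K : ℝ≥0), (0, 0) ∈ U ∧ IsOpen U ∧
      LipschitzOnWith K (fderiv ℝ f) U ∧ LipschitzOnWith K (fderiv ℝ h) U) :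
    ∃ (ε L : ℝ), 0 < ε ∧ 0 ≤ L ∧
      ∃ ψ : (Fin n → ℝ) → Fin n → ℝ, ψ 0 = 0 ∧
        LipschitzOnWith (Real.toNNReal L) ψ (Metric.closedBall 0 ε) ∧
        ∀ x₀ : Fin n → ℝ, ‖x₀‖ ≤ ε →
          ∃ x : ℕ → Fin n → ℝ, x 0 = x₀ ∧ (∀ k, ‖x k‖ ≤ ε) ∧
            (∀ k, x (k + 1) = C.mulVec (x k) + f (x k, x (k + 1))) ∧
            (∀ k, ψ (x k) = Cᵀ.mulVec (ψ (x (k + 1))) + h (x k, x (k + 1))) ∧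
            Filter.Tendsto x Filter.atTop (nhds 0) :=
  local_stable_manifold_general C α hα0 hα1 hC hCT f h hf hh hf0 hh0 hdf0 hdh0
end

section
/- Let M and P be n×n real matrices with P symmetric and Mᵀ·P·M − P = −I. Let g : ℝⁿ → ℝⁿ and c ≥ 0 satisfy ‖g(x)‖ ≤ c‖x‖ for all x, where 2c·‖MᵀP‖ + c²·‖P‖ ≤ 2/3 (operator norms). Then for every x ∈ ℝⁿ, setting x⁺ = M·x + g(x), one has (x⁺)ᵀ·P·x⁺ − xᵀ·P·x ≤ −‖x‖²/3. -/
/-!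
With `x⁺ = M x + b`, self-adjointness of `P` gives
`v(x⁺) - v(x) = (v(M x) - v(x)) + 2⟪(MᵀP) b, x⟫ + ⟪b, P b⟫`. The Lyapunov equation turns the
first term into `-‖x‖²`, and the operator norms bound the other two by
`(2c‖MᵀP‖ + c²‖P‖)‖x‖² ≤ 2/3 ‖x‖²`. Matrices are carried to operators on Euclidean space by the
star-algebra isomorphism `Matrix.toEuclideanCLM`, under which `Mᵀ` becomes the adjoint of `M`.
-/

open scoped Matrix RealInnerProductSpace

lemma LinearMap.IsSymmetric.inner_add_apply_add {E : Type*} [NormedAddCommGroup E]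
    [InnerProductSpace ℝ E] {P : E →ₗ[ℝ] E} (hP : P.IsSymmetric) (a b : E) :
    ⟪a + b, P (a + b)⟫ = ⟪a, P a⟫ + 2 * ⟪b, P a⟫ + ⟪b, P b⟫ := by
  have hab : ⟪a, P b⟫ = ⟪b, P a⟫ := by rw [← hP, real_inner_comm]
  rw [map_add, inner_add_left, inner_add_right, inner_add_right, hab]
  ring

namespace ContinuousLinearMap

variable {E : Type*} [NormedAddCommGroup E] [InnerProductSpace ℝ E] [CompleteSpace E]
  {M P : E →L[ℝ] E}

lemma inner_apply_apply_of_lyapunov (hLyap : star M * P * M - P = -1)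
    (x : E) : ⟪M x, P (M x)⟫ = ⟪x, P x⟫ - ‖x‖ ^ 2 := by
  have hx : star M (P (M x)) = P x - x := by
    have := congr($hLyap x)
    simp only [sub_apply, mul_apply_eq_comp, neg_apply, one_apply_eq_self] at this
    linear_combination (norm := module) this
  rw [← adjoint_inner_right, ← star_eq_adjoint, hx, inner_sub_right, real_inner_self_eq_norm_sq]

lemma inner_apply_apply_eq_inner_star_mul_apply (hP : IsSelfAdjoint P) (x y : E) :
    ⟪y, P (M x)⟫ = ⟪(star M * P) y, x⟫ := by
  rw [mul_apply_eq_comp, star_eq_adjoint, adjoint_inner_left]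
  exact (hP.isSymmetric y (M x)).symm

lemma lyapunov_sub_le (hP : IsSelfAdjoint P) (hLyap : star M * P * M - P = -1) (x b : E) :
    ⟪M x + b, P (M x + b)⟫ - ⟪x, P x⟫ ≤
      -‖x‖ ^ 2 + 2 * ‖star M * P‖ * ‖b‖ * ‖x‖ + ‖P‖ * ‖b‖ ^ 2 := by
  have hcross : ⟪b, P (M x)⟫ ≤ ‖star M * P‖ * ‖b‖ * ‖x‖ := by
    rw [inner_apply_apply_eq_inner_star_mul_apply hP]
    exact (real_inner_le_norm _ _).trans (by gcongr; exact le_opNorm _ _)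
  have hquad : ⟪b, P b⟫ ≤ ‖P‖ * ‖b‖ ^ 2 := by
    calc ⟪b, P b⟫ ≤ ‖b‖ * ‖P b‖ := real_inner_le_norm _ _
      _ ≤ ‖b‖ * (‖P‖ * ‖b‖) := by gcongr; exact le_opNorm _ _
      _ = ‖P‖ * ‖b‖ ^ 2 := by ring
  have hexpand := hP.isSymmetric.inner_add_apply_add (M x) b
  simp only [coe_coe] at hexpand
  rw [hexpand, inner_apply_apply_of_lyapunov hLyap]
  linarith

lemma lyapunov_sub_le_of_norm_le (hP : IsSelfAdjoint P) (hLyap : star M * P * M - P = -1)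
    {c : ℝ} {x b : E} (hb : ‖b‖ ≤ c * ‖x‖) :
    ⟪M x + b, P (M x + b)⟫ - ⟪x, P x⟫ ≤
      -(1 - (2 * c * ‖star M * P‖ + c ^ 2 * ‖P‖)) * ‖x‖ ^ 2 := by
  have hb2 : ‖b‖ ^ 2 ≤ c ^ 2 * ‖x‖ ^ 2 := by
    rw [← mul_pow]; exact pow_le_pow_left₀ (norm_nonneg b) hb 2
  have hcross : ‖star M * P‖ * ‖b‖ * ‖x‖ ≤ ‖star M * P‖ * (c * ‖x‖) * ‖x‖ := by gcongr
  have hquad : ‖P‖ * ‖b‖ ^ 2 ≤ ‖P‖ * (c ^ 2 * ‖x‖ ^ 2) := by gcongr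
  linarith [lyapunov_sub_le hP hLyap x b]

end ContinuousLinearMap

theorem lyapunov_decrease_general {n : ℕ} (M P : Matrix (Fin n) (Fin n) ℝ)
    (hPsymm : Pᵀ = P) (hLyap : Mᵀ * P * M - P = -1)
    (g : EuclideanSpace ℝ (Fin n) → EuclideanSpace ℝ (Fin n)) (c : ℝ)
    (hg : ∀ x, ‖g x‖ ≤ c * ‖x‖)
    (hsmall : 2 * c * ‖LinearMap.toContinuousLinearMap (Matrix.toEuclideanLin (Mᵀ * P))‖
        + c ^ 2 * ‖LinearMap.toContinuousLinearMap (Matrix.toEuclideanLin P)‖ ≤ 2 / 3) :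
    ∀ x : EuclideanSpace ℝ (Fin n),
      (inner ℝ (Matrix.toEuclideanLin M x + g x)
          (Matrix.toEuclideanLin P (Matrix.toEuclideanLin M x + g x)) : ℝ)
        - (inner ℝ x (Matrix.toEuclideanLin P x) : ℝ) ≤ -‖x‖ ^ 2 / 3 := by
  intro x
  let T := Matrix.toEuclideanCLM (n := Fin n) (𝕜 := ℝ)
  have hstar : ∀ A : Matrix (Fin n) (Fin n) ℝ, star (T A) = T Aᵀ := fun A => by
    rw [← map_star, Matrix.star_eq_conjTranspose, Matrix.conjTranspose_eq_transpose_of_trivial]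
  have hP : IsSelfAdjoint (T P) := by rw [IsSelfAdjoint, hstar, hPsymm]
  have hL : star (T M) * T P * T M - T P = -1 := by
    rw [hstar, ← map_mul, ← map_mul, ← map_sub, hLyap, map_neg, map_one]
  have hdec := ContinuousLinearMap.lyapunov_sub_le_of_norm_le hP hL (hg x)
  rw [hstar, ← map_mul] at hdec
  change 2 * c * ‖T (Mᵀ * P)‖ + c ^ 2 * ‖T P‖ ≤ 2 / 3 at hsmall
  refine hdec.trans ?_
  nlinarith [sq_nonneg ‖x‖]

/-- Lyapunov decrease for the perturbed closed-loop dynamics: if `P` is symmetric with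
`MᵀPM - P = -I`, `‖g x‖ ≤ c ‖x‖`, and `2c‖MᵀP‖ + c²‖P‖ ≤ 2/3` (operator norms), then
along `x⁺ = Mx + g x` the Lyapunov function `v(x) = xᵀPx` satisfies
`v(x⁺) - v(x) ≤ -‖x‖²/3`. -/
theorem lyapunov_decrease {n : ℕ} (M P : Matrix (Fin n) (Fin n) ℝ)
    (hPsymm : Pᵀ = P) (hLyap : Mᵀ * P * M - P = -1)
    (g : EuclideanSpace ℝ (Fin n) → EuclideanSpace ℝ (Fin n)) (c : ℝ) (hc : 0 ≤ c)
    (hg : ∀ x, ‖g x‖ ≤ c * ‖x‖)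
    (hsmall : 2 * c * ‖LinearMap.toContinuousLinearMap (Matrix.toEuclideanLin (Mᵀ * P))‖
        + c ^ 2 * ‖LinearMap.toContinuousLinearMap (Matrix.toEuclideanLin P)‖ ≤ 2 / 3) :
    ∀ x : EuclideanSpace ℝ (Fin n),
      (inner ℝ (Matrix.toEuclideanLin M x + g x)
          (Matrix.toEuclideanLin P (Matrix.toEuclideanLin M x + g x)) : ℝ)
        - (inner ℝ x (Matrix.toEuclideanLin P x) : ℝ) ≤ -‖x‖ ^ 2 / 3 :=
  lyapunov_decrease_general M P hPsymm hLyap g c hg hsmall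
end

section
/- Let Qm, Rm, Mm be n×n real matrices with Qm and Rm symmetric. Let δx, δλ, δx⁺, δλ⁺ and δ̃x, δ̃λ, δ̃x⁺, δ̃λ⁺ be vectors in ℝⁿ satisfying the tangent dynamics δx⁺ = Mm·δx + Rm·δλ⁺ and δλ = Qm·δx + Mmᵀ·δλ⁺, and likewise δ̃x⁺ = Mm·δ̃x + Rm·δ̃λ⁺ and δ̃λ = Qm·δ̃x + Mmᵀ·δ̃λ⁺. Then ⟨δx, δ̃λ⟩ − ⟨δλ, δ̃x⟩ = ⟨δx⁺, δ̃λ⁺⟩ − ⟨δλ⁺, δ̃x⁺⟩, where ⟨·,·⟩ is the Euclidean inner product on ℝⁿ. -/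
open scoped Matrix

private lemma cross_dot {n : ℕ} (M : Matrix (Fin n) (Fin n) ℝ) (a b : Fin n → ℝ) :
    a ⬝ᵥ Mᵀ.mulVec b = b ⬝ᵥ M.mulVec a := by
  rw [Matrix.dotProduct_mulVec, Matrix.vecMul_transpose, dotProduct_comm]

private lemma symm_dot {n : ℕ} (M : Matrix (Fin n) (Fin n) ℝ) (hM : Mᵀ = M)
    (a b : Fin n → ℝ) : a ⬝ᵥ M.mulVec b = b ⬝ᵥ M.mulVec a := by
  conv_lhs => rw [← hM]
  exact cross_dot M a b

/-- Invariance of the symplectic two-form under the tangent Hamiltonian dynamics: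
if `δx⁺ = Mm δx + Rm δλ⁺`, `δλ = Qm δx + Mmᵀ δλ⁺` (and likewise for the tilde
variables) with `Qm`, `Rm` symmetric, then
`⟨δx, δ̃λ⟩ - ⟨δλ, δ̃x⟩ = ⟨δx⁺, δ̃λ⁺⟩ - ⟨δλ⁺, δ̃x⁺⟩`. -/
theorem symplectic_form_invariant {n : ℕ} (Qm Rm Mm : Matrix (Fin n) (Fin n) ℝ)
    (hQ : Qmᵀ = Qm) (hR : Rmᵀ = Rm)
    (dx dl dxp dlp tdx tdl tdxp tdlp : Fin n → ℝ)
    (h1 : dxp = Mm.mulVec dx + Rm.mulVec dlp)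
    (h2 : dl = Qm.mulVec dx + Mmᵀ.mulVec dlp)
    (h3 : tdxp = Mm.mulVec tdx + Rm.mulVec tdlp)
    (h4 : tdl = Qm.mulVec tdx + Mmᵀ.mulVec tdlp) :
    dx ⬝ᵥ tdl - dl ⬝ᵥ tdx = dxp ⬝ᵥ tdlp - dlp ⬝ᵥ tdxp := by
  subst h1 h2 h3 h4
  simp only [dotProduct_add, add_dotProduct]
  have e1 : Qm.mulVec dx ⬝ᵥ tdx = dx ⬝ᵥ Qm.mulVec tdx := by
    rw [dotProduct_comm, symm_dot Qm hQ]
  have e2 : Rm.mulVec dlp ⬝ᵥ tdlp = dlp ⬝ᵥ Rm.mulVec tdlp := by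
    rw [dotProduct_comm, symm_dot Rm hR]
  have e3 : dx ⬝ᵥ Mmᵀ.mulVec tdlp = Mm.mulVec dx ⬝ᵥ tdlp := by
    rw [cross_dot, dotProduct_comm]
  have e4 : Mmᵀ.mulVec dlp ⬝ᵥ tdx = dlp ⬝ᵥ Mm.mulVec tdx := by
    rw [dotProduct_comm, cross_dot]
  rw [e1, e2, e3, e4]
  ring
end
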